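/- arXiv:2010.13032 — 3 statements merged into one kernel-verified Lean document; each statement's English description precedes it below -/
import Mathlib

section
/- Let f : ℝ^d → ℝ be m-strongly convex with L-Lipschitz gradient and global minimizer θ*. Let g be a random vector with 𝔼[g] = ∇f(θ) and 𝔼[‖g‖²] ≤ σ² + c‖∇f(θ)‖² with c ≥ 1 and σ ≥ 0. Then for any step size μ ∈ (0, 1/(Lc)] and θ⁺ = θ - μg, 𝔼[f(θ⁺)] - f(θ*) - μLσ²/(2m) ≤ (1 - μm)(f(θ) - f(θ*) - μLσ²/(2m)). -/
open MeasureTheory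
open scoped RealInnerProductSpace

/-!
By the descent lemma and unbiasedness of `G`, one step satisfies
`𝔼 f(θ⁺) ≤ f θ - η ‖∇f θ‖² + L η² 𝔼‖G‖² / 2`. Under `η L c ≤ 1` the second-moment bound
costs at most half of the first-order decrease, leaving `-η ‖∇f θ‖² / 2 + L η² σ² / 2`, and the
PL inequality `‖∇f θ‖² ≥ 2 m (f θ - f θ*)` turns this into the contraction by `1 - η m`.
-/

section

variable {E : Type*} [NormedAddCommGroup E] [InnerProductSpace ℝ E]

theorem descent_lemma [CompleteSpace E] {f : E → ℝ} {g : E → E} {L : ℝ}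
    (hgrad : ∀ x, HasGradientAt f (g x) x) (hlip : ∀ x y, ‖g x - g y‖ ≤ L * ‖x - y‖)
    (x y : E) : f y ≤ f x + ⟪g x, y - x⟫ + L / 2 * ‖y - x‖ ^ 2 := by
  obtain ⟨v, rfl⟩ : ∃ v, y = x + v := ⟨y - x, by abel⟩
  rw [add_sub_cancel_left]
  -- `φ' t = ⟪g (x + t • v) - g x, v⟫ - L t ‖v‖² ≤ 0` on `[0, 1]` by the Lipschitz bound
  let φ : ℝ → ℝ := fun t => f (x + t • v) - t * ⟪g x, v⟫ - L / 2 * t ^ 2 * ‖v‖ ^ 2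
  have hφ : ∀ t, HasDerivAt φ (⟪g (x + t • v), v⟫ - ⟪g x, v⟫ - L * t * ‖v‖ ^ 2) t := by
    intro t
    have hline : HasDerivAt (fun t : ℝ => x + t • v) v t := by
      simpa using ((hasDerivAt_id t).smul_const v).const_add x
    have hf := (hgrad (x + t • v)).hasFDerivAt.comp_hasDerivAt t hline
    simp only [Function.comp_def, InnerProductSpace.toDual_apply_apply] at hf
    refine ((hf.sub ((hasDerivAt_id t).mul_const ⟪g x, v⟫)).sub
      (((hasDerivAt_pow 2 t).const_mul (L / 2)).mul_const (‖v‖ ^ 2))).congr_deriv ?_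
    simp only [Nat.cast_ofNat]; ring
  have hφ' : ∀ t ∈ interior (Set.Icc (0 : ℝ) 1),
      ⟪g (x + t • v), v⟫ - ⟪g x, v⟫ - L * t * ‖v‖ ^ 2 ≤ 0 := by
    intro t ht
    rw [interior_Icc] at ht
    have hnorm : ‖x + t • v - x‖ = t * ‖v‖ := by
      rw [add_sub_cancel_left, norm_smul, Real.norm_of_nonneg ht.1.le]
    rw [sub_nonpos]
    calc ⟪g (x + t • v), v⟫ - ⟪g x, v⟫ = ⟪g (x + t • v) - g x, v⟫ := (inner_sub_left ..).symm
      _ ≤ ‖g (x + t • v) - g x‖ * ‖v‖ := real_inner_le_norm _ _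
      _ ≤ L * ‖x + t • v - x‖ * ‖v‖ := by gcongr; exact hlip _ _
      _ = L * t * ‖v‖ ^ 2 := by rw [hnorm]; ring
  have hanti : AntitoneOn φ (Set.Icc 0 1) :=
    antitoneOn_of_hasDerivWithinAt_nonpos (convex_Icc 0 1)
      (fun t _ => (hφ t).continuousAt.continuousWithinAt)
      (fun t _ => (hφ t).hasDerivWithinAt) hφ'
  have := hanti (by simp) (by simp) zero_le_one
  simp only [φ, one_smul, zero_smul, add_zero] at this
  linarith

theorem two_mul_sub_le_sq_norm_of_strongly_convex {f : E → ℝ} {v x y : E} {m : ℝ} (hm : 0 < m)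
    (hstrong : f y ≥ f x + ⟪v, y - x⟫ + m / 2 * ‖y - x‖ ^ 2) :
    2 * m * (f x - f y) ≤ ‖v‖ ^ 2 := by
  have hcs : -(‖v‖ * ‖y - x‖) ≤ ⟪v, y - x⟫ := neg_le_of_abs_le (abs_real_inner_le_norm _ _)
  -- minimizing `-‖v‖ r + m r² / 2` over `r` gives `-‖v‖² / (2 m)`
  nlinarith [sq_nonneg (‖v‖ - m * ‖y - x‖)]

theorem integral_comp_sgd_step_le [CompleteSpace E] {Ω : Type*} [MeasurableSpace Ω]
    {P : Measure Ω} [IsProbabilityMeasure P] {f : E → ℝ} {g : E → E} {L η : ℝ}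
    (hgrad : ∀ x, HasGradientAt f (g x) x) (hlip : ∀ x y, ‖g x - g y‖ ≤ L * ‖x - y‖)
    {θ : E} {G : Ω → E} (hGint : Integrable G P) (hG2int : Integrable (fun ω => ‖G ω‖ ^ 2) P)
    (hfint : Integrable (fun ω => f (θ - η • G ω)) P) (hmean : ∫ ω, G ω ∂P = g θ) :
    ∫ ω, f (θ - η • G ω) ∂P ≤ f θ - η * ‖g θ‖ ^ 2 + L / 2 * η ^ 2 * ∫ ω, ‖G ω‖ ^ 2 ∂P := by
  have hstep : ∀ ω, f (θ - η • G ω) ≤ f θ - η * ⟪g θ, G ω⟫ + L / 2 * η ^ 2 * ‖G ω‖ ^ 2 := by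
    intro ω
    have h := descent_lemma hgrad hlip θ (θ - η • G ω)
    rwa [sub_sub_cancel_left, inner_neg_right, norm_neg, real_inner_smul_right, norm_smul,
      mul_pow, Real.norm_eq_abs, sq_abs, ← sub_eq_add_neg, ← mul_assoc] at h
  have hinner : Integrable (fun ω => η * ⟪g θ, G ω⟫) P := (hGint.const_inner (g θ)).const_mul η
  have hlinear : Integrable (fun ω => f θ - η * ⟪g θ, G ω⟫) P := (integrable_const _).sub hinner
  calc ∫ ω, f (θ - η • G ω) ∂P
      ≤ ∫ ω, (f θ - η * ⟪g θ, G ω⟫ + L / 2 * η ^ 2 * ‖G ω‖ ^ 2) ∂P :=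
        integral_mono hfint (hlinear.add (hG2int.const_mul _)) hstep
    _ = f θ - η * ‖g θ‖ ^ 2 + L / 2 * η ^ 2 * ∫ ω, ‖G ω‖ ^ 2 ∂P := by
        rw [integral_add hlinear (hG2int.const_mul _),
          integral_sub (integrable_const _) hinner, integral_const, integral_const_mul,
          integral_const_mul, integral_inner hGint, hmean, real_inner_self_eq_norm_sq]
        simp

end

theorem stmt_11_general {d : ℕ} {Ω : Type*} [MeasurableSpace Ω]
    (P : Measure Ω) [IsProbabilityMeasure P]
    (f : EuclideanSpace ℝ (Fin d) → ℝ)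
    (g : EuclideanSpace ℝ (Fin d) → EuclideanSpace ℝ (Fin d))
    (m L σ c : ℝ) (hm : 0 < m) (hL : 0 < L)
    (hgrad : ∀ x, HasGradientAt f (g x) x)
    (hstrong : ∀ x y, f y ≥ f x + ⟪g x, y - x⟫ + m / 2 * ‖y - x‖ ^ 2)
    (hlip : ∀ x y, ‖g x - g y‖ ≤ L * ‖x - y‖)
    (θstar : EuclideanSpace ℝ (Fin d))
    (θ : EuclideanSpace ℝ (Fin d)) (G : Ω → EuclideanSpace ℝ (Fin d))
    (hGint : Integrable G P)
    (hG2int : Integrable (fun ω => ‖G ω‖ ^ 2) P)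
    (η : ℝ) (hη0 : 0 < η) (hη1 : η ≤ 1 / (L * c))
    (hfint : Integrable (fun ω => f (θ - η • G ω)) P)
    (hmean : (∫ ω, G ω ∂P) = g θ)
    (hsec : (∫ ω, ‖G ω‖ ^ 2 ∂P) ≤ σ ^ 2 + c * ‖g θ‖ ^ 2) :
    (∫ ω, f (θ - η • G ω) ∂P) - f θstar - η * L * σ ^ 2 / (2 * m) ≤
      (1 - η * m) * (f θ - f θstar - η * L * σ ^ 2 / (2 * m)) := by
  have hdescent := integral_comp_sgd_step_le hgrad hlip hGint hG2int hfint hmean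
  have hPL := two_mul_sub_le_sq_norm_of_strongly_convex hm (hstrong θ θstar)
  have hLc : 0 < L * c := one_div_pos.mp (hη0.trans_le hη1)
  have hηLc : η * (L * c) ≤ 1 := (le_div_iff₀ hLc).mp hη1
  have hsec' : L / 2 * η ^ 2 * ∫ ω, ‖G ω‖ ^ 2 ∂P ≤ L / 2 * η ^ 2 * (σ ^ 2 + c * ‖g θ‖ ^ 2) :=
    mul_le_mul_of_nonneg_left hsec (by positivity)
  have hhalf : L / 2 * η ^ 2 * (c * ‖g θ‖ ^ 2) ≤ η / 2 * ‖g θ‖ ^ 2 := by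
    linarith [mul_le_mul_of_nonneg_left hηLc (mul_nonneg hη0.le (sq_nonneg ‖g θ‖))]
  have hσm : η * m * (η * L * σ ^ 2 / (2 * m)) = L / 2 * η ^ 2 * σ ^ 2 := by
    field_simp
  linarith [mul_le_mul_of_nonneg_left hPL (by positivity : (0 : ℝ) ≤ η / 2)]

theorem stmt_11 {d : ℕ} {Ω : Type*} [MeasurableSpace Ω]
    (P : Measure Ω) [IsProbabilityMeasure P]
    (f : EuclideanSpace ℝ (Fin d) → ℝ)
    (g : EuclideanSpace ℝ (Fin d) → EuclideanSpace ℝ (Fin d))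
    (m L σ c : ℝ) (hm : 0 < m) (hL : 0 < L) (hc : 1 ≤ c) (hσ : 0 ≤ σ)
    (hgrad : ∀ x, HasGradientAt f (g x) x)
    (hstrong : ∀ x y, f y ≥ f x + ⟪g x, y - x⟫ + m / 2 * ‖y - x‖ ^ 2)
    (hlip : ∀ x y, ‖g x - g y‖ ≤ L * ‖x - y‖)
    (θstar : EuclideanSpace ℝ (Fin d)) (hmin : ∀ x, f θstar ≤ f x)
    (θ : EuclideanSpace ℝ (Fin d)) (G : Ω → EuclideanSpace ℝ (Fin d))
    (hGint : Integrable G P)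
    (hG2int : Integrable (fun ω => ‖G ω‖ ^ 2) P)
    (η : ℝ) (hη0 : 0 < η) (hη1 : η ≤ 1 / (L * c))
    (hfint : Integrable (fun ω => f (θ - η • G ω)) P)
    (hmean : (∫ ω, G ω ∂P) = g θ)
    (hsec : (∫ ω, ‖G ω‖ ^ 2 ∂P) ≤ σ ^ 2 + c * ‖g θ‖ ^ 2) :
    (∫ ω, f (θ - η • G ω) ∂P) - f θstar - η * L * σ ^ 2 / (2 * m) ≤
      (1 - η * m) * (f θ - f θstar - η * L * σ ^ 2 / (2 * m)) :=
  stmt_11_general P f g m L σ c hm hL hgrad hstrong hlip θstar θ G hGint hG2int η hη0 hη1 hfint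
    hmean hsec
end

section
/- Let n ≥ 2, χ₁ ≥ χ₂ ≥ ... with χₗ > 0, and Δ₁ ≤ Δ₂ ≤ ... with Δₗ ≥ 0, indexed by l ∈ {1,...,n}, where χ₁ = max χₗ and Δ₁ = min Δₗ. Then n ∑ₗ χₗ Δₗ - (∑ₚ χₚ)(∑ₗ Δₗ) ≤ (χ₁ - χ₂) ∑_{l≥2} (Δ₁ - Δₗ) ≤ 0. -/
/-!
Write `D i j = (χ i - χ j) * (Δ i - Δ j)`. Summed over all pairs, `D` gives twice the Chebyshev
defect `n ∑ χ Δ - ∑ χ ∑ Δ`, and for oppositely ordered sequences every `D i j` is nonpositive.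
Discarding all pairs that do not involve the index `1` therefore only increases the sum, leaving
`2 ∑_{l ≥ 2} D 1 l`; finally `χ 1 - χ l ≥ χ 1 - χ 2 ≥ 0` and `Δ 1 - Δ l ≤ 0` for `l ≥ 2`.
-/

open Finset

variable {ι α : Type*} [Fintype ι]

theorem sum_sum_sub_mul_sub [CommRing α] (f g : ι → α) :
    ∑ i, ∑ j, (f i - f j) * (g i - g j) =
      2 * (Fintype.card ι * ∑ i, f i * g i - (∑ i, f i) * ∑ i, g i) := by
  simp only [sub_mul, mul_sub, sum_sub_distrib, ← sum_mul, ← mul_sum, sum_const, nsmul_eq_mul,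
    card_univ, mul_assoc]
  ring

theorem sum_sum_le_sum_add_sum_erase_of_nonpos [DecidableEq ι] [AddCommGroup α] [PartialOrder α]
    [IsOrderedAddMonoid α] {M : ι → ι → α} (hM : ∀ i j, M i j ≤ 0) (i₀ : ι) :
    ∑ i, ∑ j, M i j ≤ ∑ j, M i₀ j + ∑ i ∈ univ.erase i₀, M i i₀ := by
  rw [← add_sum_erase univ _ (mem_univ i₀)]
  gcongr with i
  rw [← add_sum_erase univ _ (mem_univ i₀)]
  exact add_le_of_nonpos_right (sum_nonpos fun j _ ↦ hM i j)

theorem Antivary.card_mul_sum_sub_sum_mul_sum_le [DecidableEq ι] [CommRing α] [LinearOrder α]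
    [IsStrictOrderedRing α] {f g : ι → α} (hfg : Antivary f g) (i₀ : ι) :
    Fintype.card ι * ∑ i, f i * g i - (∑ i, f i) * ∑ i, g i ≤
      ∑ i ∈ univ.erase i₀, (f i₀ - f i) * (g i₀ - g i) := by
  have hD : ∀ i j, (f i - f j) * (g i - g j) ≤ 0 := fun i j ↦ hfg.sub_mul_sub_nonpos j i
  have hrow : ∑ j, (f i₀ - f j) * (g i₀ - g j) = ∑ j ∈ univ.erase i₀, (f i₀ - f j) * (g i₀ - g j) :=
    (sum_erase _ (by simp)).symm
  have hcol : ∑ i ∈ univ.erase i₀, (f i - f i₀) * (g i - g i₀) =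
      ∑ i ∈ univ.erase i₀, (f i₀ - f i) * (g i₀ - g i) :=
    sum_congr rfl fun i _ ↦ by ring
  have h := sum_sum_le_sum_add_sum_erase_of_nonpos hD i₀
  rw [sum_sum_sub_mul_sub, hrow, hcol, ← two_mul] at h
  exact le_of_mul_le_mul_left h two_pos

theorem stmt_13 {n : ℕ} (hn : 2 ≤ n) (χ Δ : Fin n → ℝ)
    (hχ : Antitone χ) (hΔ : Monotone Δ) :
    (n : ℝ) * ∑ l, χ l * Δ l - (∑ p, χ p) * (∑ l, Δ l) ≤
      (χ ⟨0, by omega⟩ - χ ⟨1, by omega⟩) *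
        ∑ l ∈ Finset.univ.erase ⟨0, by omega⟩, (Δ ⟨0, by omega⟩ - Δ l) ∧
    (χ ⟨0, by omega⟩ - χ ⟨1, by omega⟩) *
        ∑ l ∈ Finset.univ.erase ⟨0, by omega⟩, (Δ ⟨0, by omega⟩ - Δ l) ≤ 0 := by
  set z : Fin n := ⟨0, by omega⟩
  set o : Fin n := ⟨1, by omega⟩
  have hΔz : ∀ l, Δ z - Δ l ≤ 0 := fun l ↦ sub_nonpos.2 (hΔ (Fin.le_def.2 (Nat.zero_le _)))
  have hχ_gap : ∀ l ∈ univ.erase z, χ z - χ o ≤ χ z - χ l := fun l hl ↦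
    sub_le_sub_left (hχ (Fin.le_def.2 (Nat.one_le_iff_ne_zero.2
      (Fin.val_ne_iff.2 (ne_of_mem_erase hl))))) _
  have hchebyshev := (hχ.antivary hΔ).card_mul_sum_sub_sum_mul_sum_le z
  rw [Fintype.card_fin] at hchebyshev
  refine ⟨hchebyshev.trans ?_, ?_⟩
  · rw [mul_sum]
    exact sum_le_sum fun l hl ↦ mul_le_mul_of_nonpos_right (hχ_gap l hl) (hΔz l)
  · exact mul_nonpos_of_nonneg_of_nonpos (sub_nonneg.2 (hχ (Fin.le_def.2 (Nat.zero_le _))))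
      (sum_nonpos fun l _ ↦ hΔz l)
end

section
/- Let f : ℝ^d → ℝ be convex with minimizer θ*, let θ̂₁,...,θ̂ₙ ∈ ℝ^d, and set rₗ = f(θ̂ₗ) and assume rₗ > f(θ*) ≥ 0 for all l. Suppose rₗ and Δₗ := rₗ - f(θ*) are such that the weights aₗ = rₗ⁻¹/∑ₚ rₚ⁻¹ are used to aggregate: θ = ∑ₗ aₗ θ̂ₗ. Then f(θ) - f(θ*) ≤ (1/n) ∑ₗ (f(θ̂ₗ) - f(θ*)). -/
/-! By Jensen's inequality, the inverse-value weighted combination satisfies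
`f θ ≤ ∑ₗ (rₗ⁻¹ / ∑ₚ rₚ⁻¹) rₗ = n / ∑ₚ rₚ⁻¹`, the harmonic mean of the values `rₗ = f θ̂ₗ`.
The harmonic mean is at most the arithmetic mean (Cauchy–Schwarz). -/

open Finset

theorem Finset.card_div_sum_inv_le_sum_div_card {ι K : Type*} [Field K] [LinearOrder K]
    [IsStrictOrderedRing K] {s : Finset ι} (hs : s.Nonempty) {r : ι → K}
    (hr : ∀ i ∈ s, 0 < r i) :
    #s / ∑ i ∈ s, (r i)⁻¹ ≤ (∑ i ∈ s, r i) / #s := by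
  have hcard : (0 : K) < #s := by exact_mod_cast hs.card_pos
  have hinv : 0 < ∑ i ∈ s, (r i)⁻¹ := sum_pos (fun i hi => inv_pos.2 (hr i hi)) hs
  have hcs : (#s : K) ^ 2 ≤ (∑ i ∈ s, (r i)⁻¹) * ∑ i ∈ s, r i := by
    simpa using sum_sq_le_sum_mul_sum_of_sq_le_mul s (r := fun _ => (1 : K))
      (fun i hi => (inv_pos.2 (hr i hi)).le) (fun i hi => (hr i hi).le)
      (fun i hi => by simp [inv_mul_cancel₀ (hr i hi).ne'])
  rw [div_le_div_iff₀ hinv hcard, ← sq, mul_comm]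
  exact hcs

theorem ConvexOn.map_sum_inv_div_sum_inv_smul_le {ι 𝕜 E : Type*} [Field 𝕜] [LinearOrder 𝕜]
    [IsStrictOrderedRing 𝕜] [AddCommGroup E] [Module 𝕜 E] {D : Set E} {f : E → 𝕜}
    (hf : ConvexOn 𝕜 D f) {s : Finset ι} (hs : s.Nonempty) {x : ι → E}
    (hx : ∀ i ∈ s, x i ∈ D) (hpos : ∀ i ∈ s, 0 < f (x i)) :
    f (∑ i ∈ s, ((f (x i))⁻¹ / ∑ j ∈ s, (f (x j))⁻¹) • x i) ≤ #s / ∑ i ∈ s, (f (x i))⁻¹ := by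
  set S := ∑ j ∈ s, (f (x j))⁻¹
  have hS : 0 < S := sum_pos (fun i hi => inv_pos.2 (hpos i hi)) hs
  calc f (∑ i ∈ s, ((f (x i))⁻¹ / S) • x i)
      ≤ ∑ i ∈ s, ((f (x i))⁻¹ / S) • f (x i) :=
        hf.map_sum_le (fun i hi => div_nonneg (inv_pos.2 (hpos i hi)).le hS.le)
          (by rw [← sum_div, div_self hS.ne']) hx
    _ = ∑ i ∈ s, 1 / S := sum_congr rfl fun i hi => by
        rw [smul_eq_mul, div_mul_eq_mul_div, inv_mul_cancel₀ (hpos i hi).ne']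
    _ = #s / S := by simp [div_eq_mul_inv]

theorem ConvexOn.map_sum_inv_div_sum_inv_smul_le_average {ι 𝕜 E : Type*} [Field 𝕜]
    [LinearOrder 𝕜] [IsStrictOrderedRing 𝕜] [AddCommGroup E] [Module 𝕜 E] {D : Set E}
    {f : E → 𝕜} (hf : ConvexOn 𝕜 D f) {s : Finset ι} (hs : s.Nonempty) {x : ι → E}
    (hx : ∀ i ∈ s, x i ∈ D) (hpos : ∀ i ∈ s, 0 < f (x i)) :
    f (∑ i ∈ s, ((f (x i))⁻¹ / ∑ j ∈ s, (f (x j))⁻¹) • x i) ≤ (∑ i ∈ s, f (x i)) / #s :=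
  (hf.map_sum_inv_div_sum_inv_smul_le hs hx hpos).trans
    (card_div_sum_inv_le_sum_div_card hs hpos)

theorem stmt_14_general {d n : ℕ} (hn : 0 < n) (f : EuclideanSpace ℝ (Fin d) → ℝ)
    (hf : ConvexOn ℝ Set.univ f)
    (θstar : EuclideanSpace ℝ (Fin d))
    (hfstar : 0 ≤ f θstar)
    (θhat : Fin n → EuclideanSpace ℝ (Fin d))
    (hr : ∀ l, f θstar < f (θhat l)) :
    f (∑ l, ((f (θhat l))⁻¹ / ∑ p, (f (θhat p))⁻¹) • θhat l) - f θstar ≤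
      (1 / (n : ℝ)) * ∑ l, (f (θhat l) - f θstar) := by
  have havg := hf.map_sum_inv_div_sum_inv_smul_le_average (univ_nonempty_iff.2 ⟨⟨0, hn⟩⟩)
    (fun l _ => Set.mem_univ (θhat l)) (fun l _ => hfstar.trans_lt (hr l))
  have hn' : (n : ℝ) ≠ 0 := by positivity
  rw [card_univ, Fintype.card_fin] at havg
  rw [sum_sub_distrib, sum_const, card_univ, Fintype.card_fin, nsmul_eq_mul, mul_sub,
    ← mul_assoc, one_div_mul_cancel hn', one_mul, one_div_mul_eq_div]
  linarith

theorem stmt_14 {d n : ℕ} (hn : 0 < n) (f : EuclideanSpace ℝ (Fin d) → ℝ)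
    (hf : ConvexOn ℝ Set.univ f)
    (θstar : EuclideanSpace ℝ (Fin d)) (hmin : ∀ x, f θstar ≤ f x)
    (hfstar : 0 ≤ f θstar)
    (θhat : Fin n → EuclideanSpace ℝ (Fin d))
    (hr : ∀ l, f θstar < f (θhat l)) :
    f (∑ l, ((f (θhat l))⁻¹ / ∑ p, (f (θhat p))⁻¹) • θhat l) - f θstar ≤
      (1 / (n : ℝ)) * ∑ l, (f (θhat l) - f θstar) :=
  stmt_14_general hn f hf θstar hfstar θhat hr
end
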